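/- arXiv:1009.1755 — 3 statements merged into one kernel-verified Lean document; each statement's English description precedes it below -/
import Mathlib

section
/- Let φ be a model function (nonnegative, continuous, increasing on [0,∞), with φ(x) ≤ C·x for all x ≥ 0 and some constant C > 0). Let t be on the unit circle, K > 0, and let λ in the open unit disk satisfy φ(|t - λ|) ≤ K·(1 - |λ|). Then for every z in the closed unit disk, (1/|1 - conj(λ)·z|)·φ(|t - z·|λ||/3) ≤ 2C + K. -/
open Complex

/-!
With `r = ‖l‖` and `d = ‖1 - conj l * z‖` one has `1 - r ≤ d`, and the identity
`t - r z = (t - l) + l (1 - conj l * z) + (r² - r) z` gives `‖t - r z‖ ≤ ‖t - l‖ + 2 d`.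
Hence `‖t - r z‖ / 3` is at most `‖t - l‖` or at most `d`; by monotonicity `φ` of it is
bounded by `K (1 - r) ≤ K d` in the first case and by `C d` in the second.
-/

theorem one_sub_norm_le_norm_one_sub_conj_mul {l z : ℂ} (hz : ‖z‖ ≤ 1) :
    1 - ‖l‖ ≤ ‖1 - starRingEnd ℂ l * z‖ := by
  have h := norm_sub_norm_le (1 : ℂ) (starRingEnd ℂ l * z)
  rw [norm_one, norm_mul, norm_conj] at h
  nlinarith [norm_nonneg l]

theorem norm_sub_mul_norm_le {t l z : ℂ} (hl : ‖l‖ ≤ 1) (hz : ‖z‖ ≤ 1) :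
    ‖t - z * (‖l‖ : ℂ)‖ ≤ ‖t - l‖ + 2 * ‖1 - starRingEnd ℂ l * z‖ := by
  set r := ‖l‖ with hr
  set d := ‖1 - starRingEnd ℂ l * z‖
  have hd : 1 - r ≤ d := one_sub_norm_le_norm_one_sub_conj_mul hz
  have hmiddle : ‖l * (1 - starRingEnd ℂ l * z)‖ ≤ d := by
    rw [norm_mul]
    exact mul_le_of_le_one_left (norm_nonneg _) hl
  have hlast : ‖z * ((r : ℂ) ^ 2 - r)‖ ≤ d := by
    have hr0 : 0 ≤ r := norm_nonneg l
    have habs : ‖(r : ℂ) ^ 2 - r‖ = r * (1 - r) := by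
      rw [← ofReal_pow, ← ofReal_sub, norm_real, Real.norm_eq_abs, abs_sub_comm,
        abs_of_nonneg (by nlinarith)]
      ring
    rw [norm_mul, habs]
    nlinarith [norm_nonneg z, mul_nonneg hr0 (sub_nonneg.2 hl)]
  calc ‖t - z * r‖ = ‖(t - l) + l * (1 - starRingEnd ℂ l * z) + z * ((r : ℂ) ^ 2 - r)‖ := by
        rw [hr, ← mul_conj']
        ring_nf
    _ ≤ ‖t - l‖ + ‖l * (1 - starRingEnd ℂ l * z)‖ + ‖z * ((r : ℂ) ^ 2 - r)‖ := norm_add₃_le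
    _ ≤ ‖t - l‖ + 2 * d := by linarith

theorem vinogradov_lemma_general (φ : ℝ → ℝ) (C K : ℝ) (hC : 0 < C) (hK : 0 < K)
    (hmono : MonotoneOn φ (Set.Ici 0))
    (hlin : ∀ x ≥ (0:ℝ), φ x ≤ C * x)
    (t l z : ℂ) (hl : ‖l‖ < 1)
    (hstolz : φ (‖t - l‖) ≤ K * (1 - ‖l‖))
    (hz : ‖z‖ ≤ 1) :
    (1 / ‖1 - (starRingEnd ℂ) l * z‖) *
      φ (‖t - z * (‖l‖ : ℂ)‖ / 3) ≤ 2 * C + K := by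
  set d := ‖1 - starRingEnd ℂ l * z‖
  have hd : 1 - ‖l‖ ≤ d := one_sub_norm_le_norm_one_sub_conj_mul hz
  have hd0 : 0 < d := by linarith
  have hkey : ‖t - z * (‖l‖ : ℂ)‖ ≤ ‖t - l‖ + 2 * d := norm_sub_mul_norm_le hl.le hz
  set a := ‖t - z * (‖l‖ : ℂ)‖
  have hφ := hmono (Set.mem_Ici.2 (by positivity : 0 ≤ a / 3))
  rw [one_div, inv_mul_eq_div, div_le_iff₀ hd0]
  rcases le_total ‖t - l‖ d with h | h
  · calc φ (a / 3) ≤ φ d := hφ (Set.mem_Ici.2 hd0.le) (by linarith)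
      _ ≤ C * d := hlin d hd0.le
      _ ≤ (2 * C + K) * d := by nlinarith
  · calc φ (a / 3) ≤ φ ‖t - l‖ := hφ (Set.mem_Ici.2 (norm_nonneg _)) (by linarith)
      _ ≤ K * d := hstolz.trans (by gcongr)
      _ ≤ (2 * C + K) * d := by nlinarith

theorem vinogradov_lemma (φ : ℝ → ℝ) (C K : ℝ) (hC : 0 < C) (hK : 0 < K)
    (hpos : ∀ x ≥ (0:ℝ), 0 ≤ φ x)
    (hcont : ContinuousOn φ (Set.Ici 0))
    (hmono : MonotoneOn φ (Set.Ici 0))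
    (hlin : ∀ x ≥ (0:ℝ), φ x ≤ C * x)
    (t l z : ℂ) (ht : ‖t‖ = 1) (hl : ‖l‖ < 1)
    (hstolz : φ (‖t - l‖) ≤ K * (1 - ‖l‖))
    (hz : ‖z‖ ≤ 1) :
    (1 / ‖1 - (starRingEnd ℂ) l * z‖) *
      φ (‖t - z * (‖l‖ : ℂ)‖ / 3) ≤ 2 * C + K :=
  vinogradov_lemma_general φ C K hC hK hmono hlin t l z hl hstolz hz
end

section
/- Let B be a finite Blaschke product with zeros z_1,…,z_N in the open unit disk (all nonzero), B(z) = ∏ (conj(z_n)/|z_n|)·(z_n - z)/(1 - conj(z_n)·z). Then for every z in the open unit disk, |B'(z)| ≤ Σ_{n=1}^N (1 - |z_n|²)/|1 - conj(z_n)·z|². -/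
/-!
Each factor `b_a(w) = (ā/|a|)(a - w)/(1 - ā w)` maps the disk into itself, since
`|1 - ā z|² - |a - z|² = (1 - |a|²)(1 - |z|²)`, and `|b_a'(z)| = (1 - |a|²)/|1 - ā z|²`.
By the product rule, `B'` is a sum of terms `b_n' ∏_{m ≠ n} b_m`, each bounded by `|b_n'|`.
-/

open Complex ComplexConjugate Finset

section ProductRule

variable {𝕜 𝔸 ι : Type*} [NontriviallyNormedField 𝕜] [NormedCommRing 𝔸] [NormOneClass 𝔸]
  [NormedAlgebra 𝕜 𝔸] [DecidableEq ι]

theorem norm_deriv_finsetProd_le_of_norm_le_one {s : Finset ι} {f : ι → 𝕜 → 𝔸} {x : 𝕜}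
    (hf : ∀ i ∈ s, DifferentiableAt 𝕜 (f i) x) (hf₁ : ∀ i ∈ s, ‖f i x‖ ≤ 1) :
    ‖deriv (fun y ↦ ∏ i ∈ s, f i y) x‖ ≤ ∑ i ∈ s, ‖deriv (f i) x‖ := by
  rw [deriv_fun_finsetProd hf]
  refine (norm_sum_le _ _).trans (sum_le_sum fun i hi ↦ ?_)
  have hprod : ‖∏ j ∈ s.erase i, f j x‖ ≤ 1 :=
    (Finset.norm_prod_le _ _).trans (prod_le_one (fun _ _ ↦ norm_nonneg _)
      fun j hj ↦ hf₁ j (mem_of_mem_erase hj))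
  calc ‖(∏ j ∈ s.erase i, f j x) • deriv (f i) x‖
      ≤ ‖∏ j ∈ s.erase i, f j x‖ * ‖deriv (f i) x‖ := norm_smul_le _ _
    _ ≤ ‖deriv (f i) x‖ := mul_le_of_le_one_left (norm_nonneg _) hprod

end ProductRule

namespace Complex

theorem normSq_one_sub_conj_mul_sub_normSq_sub (a z : ℂ) :
    normSq (1 - conj a * z) - normSq (a - z) = (1 - normSq a) * (1 - normSq z) := by
  simp only [normSq_apply, sub_re, sub_im, mul_re, mul_im, conj_re, conj_im, one_re, one_im]
  ring

theorem norm_sub_le_norm_one_sub_conj_mul {a z : ℂ} (ha : ‖a‖ ≤ 1) (hz : ‖z‖ ≤ 1) :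
    ‖a - z‖ ≤ ‖1 - conj a * z‖ := by
  have hnonneg : 0 ≤ (1 - normSq a) * (1 - normSq z) := by
    rw [normSq_eq_norm_sq, normSq_eq_norm_sq]
    exact mul_nonneg (by nlinarith [norm_nonneg a]) (by nlinarith [norm_nonneg z])
  have hsq : ‖a - z‖ ^ 2 ≤ ‖1 - conj a * z‖ ^ 2 := by
    rw [← normSq_eq_norm_sq, ← normSq_eq_norm_sq]
    linarith [normSq_one_sub_conj_mul_sub_normSq_sub a z]
  exact pow_le_pow_iff_left₀ (norm_nonneg _) (norm_nonneg _) two_ne_zero |>.mp hsq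

theorem one_sub_conj_mul_ne_zero {a z : ℂ} (ha : ‖a‖ < 1) (hz : ‖z‖ ≤ 1) :
    1 - conj a * z ≠ 0 := by
  rw [sub_ne_zero]
  intro h
  have : ‖conj a * z‖ < 1 := by
    rw [norm_mul, norm_conj]
    nlinarith [norm_nonneg a, norm_nonneg z]
  simp [← h] at this

theorem norm_conj_div_norm_le_one (a : ℂ) : ‖conj a / (‖a‖ : ℂ)‖ ≤ 1 := by
  rw [norm_div, norm_conj, norm_real, norm_norm]
  exact div_self_le_one _

end Complex

/-- The Blaschke factor with zero `a`, normalised to be positive at `0`; for `a = 0` it is the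
zero function, since `‖0‖⁻¹ = 0`. -/
noncomputable def blaschkeFactor (a w : ℂ) : ℂ :=
  conj a / (‖a‖ : ℂ) * ((a - w) / (1 - conj a * w))

theorem norm_blaschkeFactor_le_one {a z : ℂ} (ha : ‖a‖ ≤ 1) (hz : ‖z‖ ≤ 1) :
    ‖blaschkeFactor a z‖ ≤ 1 := by
  rw [blaschkeFactor, norm_mul, norm_div (a - z)]
  exact mul_le_one₀ (norm_conj_div_norm_le_one a) (by positivity)
    (div_le_one_of_le₀ (norm_sub_le_norm_one_sub_conj_mul ha hz) (norm_nonneg _))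

theorem hasDerivAt_blaschkeFactor {a z : ℂ} (hz : 1 - conj a * z ≠ 0) :
    HasDerivAt (blaschkeFactor a)
      (conj a / (‖a‖ : ℂ) * ((conj a * a - 1) / (1 - conj a * z) ^ 2)) z := by
  have hnum : HasDerivAt (fun w ↦ a - w) (-1) z := by
    simpa using (hasDerivAt_id z).const_sub a
  have hden : HasDerivAt (fun w ↦ 1 - conj a * w) (-conj a) z := by
    simpa using ((hasDerivAt_id z).const_mul (conj a)).const_sub 1
  exact ((hnum.div hden hz).const_mul _).congr_deriv (by ring)

theorem norm_deriv_blaschkeFactor_le {a z : ℂ} (ha : ‖a‖ < 1) (hz : ‖z‖ ≤ 1) :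
    ‖deriv (blaschkeFactor a) z‖ ≤ (1 - ‖a‖ ^ 2) / ‖1 - conj a * z‖ ^ 2 := by
  have hnum : conj a * a - 1 = ((‖a‖ ^ 2 - 1 : ℝ) : ℂ) := by
    rw [mul_comm, mul_conj, normSq_eq_norm_sq]
    push_cast
    ring
  have hnorm : ‖conj a * a - 1‖ = 1 - ‖a‖ ^ 2 := by
    rw [hnum, norm_real, Real.norm_of_nonpos (by nlinarith [norm_nonneg a])]
    ring
  rw [(hasDerivAt_blaschkeFactor (one_sub_conj_mul_ne_zero ha hz)).deriv, norm_mul,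
    norm_div (_ - 1), norm_pow, hnorm]
  have hbound : 0 ≤ (1 - ‖a‖ ^ 2) / ‖1 - conj a * z‖ ^ 2 :=
    div_nonneg (by nlinarith [norm_nonneg a]) (sq_nonneg _)
  exact mul_le_of_le_one_left hbound (norm_conj_div_norm_le_one a)

theorem blaschke_deriv_bound_general (N : ℕ) (f : ℕ → ℂ)
    (hf1 : ∀ n < N, ‖f n‖ < 1)
    (z : ℂ) (hz : ‖z‖ < 1) :
    ‖deriv (fun w : ℂ => ∏ n ∈ Finset.range N,
        ((starRingEnd ℂ) (f n) / (‖f n‖ : ℂ)) *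
          ((f n - w) / (1 - (starRingEnd ℂ) (f n) * w))) z‖ ≤
      ∑ n ∈ Finset.range N,
        (1 - ‖f n‖ ^ 2) / ‖1 - (starRingEnd ℂ) (f n) * z‖ ^ 2 := by
  have hf : ∀ n ∈ range N, ‖f n‖ < 1 := fun n hn ↦ hf1 n (mem_range.mp hn)
  change ‖deriv (fun w ↦ ∏ n ∈ range N, blaschkeFactor (f n) w) z‖ ≤ _
  refine (norm_deriv_finsetProd_le_of_norm_le_one (fun n hn ↦ ?_) fun n hn ↦ ?_).trans
    (sum_le_sum fun n hn ↦ norm_deriv_blaschkeFactor_le (hf n hn) hz.le)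
  · exact (hasDerivAt_blaschkeFactor (one_sub_conj_mul_ne_zero (hf n hn) hz.le)).differentiableAt
  · exact norm_blaschkeFactor_le_one (hf n hn).le hz.le

theorem blaschke_deriv_bound (N : ℕ) (f : ℕ → ℂ)
    (hf0 : ∀ n < N, f n ≠ 0) (hf1 : ∀ n < N, ‖f n‖ < 1)
    (z : ℂ) (hz : ‖z‖ < 1) :
    ‖deriv (fun w : ℂ => ∏ n ∈ Finset.range N,
        ((starRingEnd ℂ) (f n) / (‖f n‖ : ℂ)) *
          ((f n - w) / (1 - (starRingEnd ℂ) (f n) * w))) z‖ ≤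
      ∑ n ∈ Finset.range N,
        (1 - ‖f n‖ ^ 2) / ‖1 - (starRingEnd ℂ) (f n) * z‖ ^ 2 :=
  blaschke_deriv_bound_general N f hf1 z hz
end

section
/- For any analytic function g mapping the open unit disk into the closed unit disk (Schwarz–Pick), and any p with 0 < p < 1, the integral of |g'(z)|^p over the open unit disk with respect to Lebesgue area measure is finite; i.e., g' belongs to the Bergman space A^p. -/
open Complex MeasureTheory Set Metric

/-! The Cauchy estimate on the disc of radius `1 - ‖z‖` about `z` gives
`‖g' z‖ ≤ 2 / (1 - ‖z‖)`, and in polar coordinates `(1 - ‖z‖) ^ (-p)` is integrable on the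
unit disc because `(1 - r) ^ (-p)` is integrable on `(0, 1)` for `p < 1`. -/

lemma integrableOn_Ioo_one_sub_rpow {s : ℝ} (hs : -1 < s) :
    IntegrableOn (fun y : ℝ => (1 - y) ^ s) (Ioo 0 1) := by
  have h := (intervalIntegral.intervalIntegrable_rpow' (a := 0) (b := 1) hs).comp_sub_left 1
  rw [sub_zero, sub_self] at h
  exact (intervalIntegrable_iff_integrableOn_Ioo_of_le zero_le_one).1 h.symm

lemma integrableOn_ball_one_sub_norm_rpow {E : Type*} [NormedAddCommGroup E] [NormedSpace ℝ E]
    [MeasurableSpace E] [BorelSpace E] [FiniteDimensional ℝ E] [Nontrivial E]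
    (μ : Measure E) [μ.IsAddHaarMeasure] {s : ℝ} (hs : -1 < s) :
    IntegrableOn (fun x : E => (1 - ‖x‖) ^ s) (ball 0 1) μ := by
  rw [integrableOn_fun_norm_addHaar μ (f := fun y => (1 - y) ^ s)]
  refine (integrableOn_Ioo_one_sub_rpow hs).mono' ?_ ?_
  · exact (by fun_prop : Measurable _).aestronglyMeasurable
  · filter_upwards [ae_restrict_mem measurableSet_Ioo] with y ⟨hy0, hy1⟩
    rw [smul_eq_mul, norm_mul, norm_pow, Real.norm_of_nonneg hy0.le,
      Real.norm_of_nonneg (Real.rpow_nonneg (by linarith) s)]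
    exact mul_le_of_le_one_left (Real.rpow_nonneg (by linarith) s) (pow_le_one₀ hy0.le hy1.le)

lemma norm_deriv_le_two_mul_div_one_sub_norm {E : Type*} [NormedAddCommGroup E] [NormedSpace ℂ E]
    {f : ℂ → E} {M : ℝ} (hf : DifferentiableOn ℂ f (ball 0 1))
    (hM : ∀ z ∈ ball (0 : ℂ) 1, ‖f z‖ ≤ M) {z : ℂ} (hz : z ∈ ball (0 : ℂ) 1) :
    ‖deriv f z‖ ≤ 2 * M / (1 - ‖z‖) := by
  have hz1 : ‖z‖ < 1 := mem_ball_zero_iff.1 hz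
  have hsub : ball z (1 - ‖z‖) ⊆ ball 0 1 := ball_subset_ball' (by simp)
  refine norm_deriv_le_div_of_mapsTo_ball (hf.mono hsub) (fun w hw => ?_) (by linarith)
  rw [mem_closedBall, dist_eq_norm, two_mul]
  exact (norm_sub_le _ _).trans (add_le_add (hM w (hsub hw)) (hM z hz))

theorem schwarz_pick_deriv_bergman (g : ℂ → ℂ)
    (hg : DifferentiableOn ℂ g (Metric.ball (0:ℂ) 1))
    (hb : ∀ z ∈ Metric.ball (0:ℂ) 1, ‖g z‖ ≤ 1)
    (p : ℝ) (hp0 : 0 < p) (hp1 : p < 1) :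
    IntegrableOn (fun z : ℂ => ‖deriv g z‖ ^ p)
      (Metric.ball (0:ℂ) 1) volume := by
  have hdom := (integrableOn_ball_one_sub_norm_rpow (volume : Measure ℂ) (s := -p)
    (by linarith)).const_mul (2 ^ p)
  refine hdom.mono' ?_ ?_
  · exact ((hg.analyticOnNhd isOpen_ball).deriv.continuousOn.norm.rpow_const
      fun _ _ => Or.inr hp0.le).aestronglyMeasurable measurableSet_ball
  · filter_upwards [ae_restrict_mem measurableSet_ball] with z hz
    have hz1 : 0 < 1 - ‖z‖ := by linarith [mem_ball_zero_iff.1 hz]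
    have hderiv := norm_deriv_le_two_mul_div_one_sub_norm hg hb hz
    rw [Real.norm_of_nonneg (by positivity), Real.rpow_neg hz1.le, ← div_eq_mul_inv,
      ← Real.div_rpow zero_le_two hz1.le, ← mul_one 2]
    exact Real.rpow_le_rpow (norm_nonneg _) hderiv hp0.le
end
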